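/- Let A = U_A D_A V_Aᵀ and B' = U_B D_B V_Bᵀ be real m₁ × m₂ matrices such that U_Aᵀ U_B = 0 and V_Aᵀ V_B = 0 (the column spaces of U_A, U_B are orthogonal and likewise for V_A, V_B), where U_A, U_B, V_A, V_B have orthonormal columns and D_A, D_B are diagonal with positive diagonal entries. Then the multiset of nonzero singular values of A + B' is the union of the nonzero singular values of A and of B'; consequently TL1_a(A + B') = TL1_a(A) + TL1_a(B') for every a > 0. -/

import Mathlib

open Matrix

theorem PosSemidef.isHermitian_oldSqrt {n : Type*} [Fintype n] [DecidableEq n] {A : Matrix n n ℝ}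
    (hA : A.PosSemidef) :
    (hA.1.eigenvectorUnitary.1 * diagonal ((√·) ∘ hA.1.eigenvalues) *
      (star hA.1.eigenvectorUnitary : Matrix n n ℝ)).IsHermitian := by
  simp [IsHermitian, Matrix.mul_assoc, Matrix.star_eq_conjTranspose,
    conjTranspose_eq_transpose_of_trivial]

open scoped MatrixOrder in
lemma oldSqrt_eq_of_sq_eq {n : Type*} [Fintype n] [DecidableEq n] {S T : Matrix n n ℝ}
    (hS : S.PosSemidef) (hT : T.PosSemidef) (h : S ^ 2 = T) :
    hT.1.eigenvectorUnitary.1 * diagonal ((√·) ∘ hT.1.eigenvalues) *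
      (star hT.1.eigenvectorUnitary : Matrix n n ℝ) = S := by
  have h1 : cfc Real.sqrt T = hT.1.eigenvectorUnitary.1 * diagonal ((√·) ∘ hT.1.eigenvalues) *
      (star hT.1.eigenvectorUnitary : Matrix n n ℝ) := by
    rw [hT.1.cfc_eq, IsHermitian.cfc, Unitary.conjStarAlgAut_apply]
    rfl
  rw [← h1, ← cfcₙ_eq_cfc, ← CFC.sqrt_eq_real_sqrt T hT.nonneg, ← h, CFC.sqrt_sq S hS.nonneg]

lemma eig_congr {n : Type*} [Fintype n] [DecidableEq n] {M N : Matrix n n ℝ}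
    (hM : M.IsHermitian) (hN : N.IsHermitian) (h : M = N) :
    hM.eigenvalues = hN.eigenvalues := by subst h; rfl

lemma trace_resolvent {n : Type*} [Fintype n] [DecidableEq n] (a : ℝ) (ha : 0 < a)
    {S : Matrix n n ℝ} (hS : S.PosSemidef) :
    trace (S * (a • (1 : Matrix n n ℝ) + S)⁻¹) =
      ∑ j, hS.1.eigenvalues j / (a + hS.1.eigenvalues j) := by
  set U : Matrix n n ℝ := (hS.1.eigenvectorUnitary : Matrix n n ℝ) with hUdef
  have hU1 : star U * U = 1 := Matrix.mem_unitaryGroup_iff'.mp hS.1.eigenvectorUnitary.2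
  have hU2 : U * star U = 1 := Matrix.mem_unitaryGroup_iff.mp hS.1.eigenvectorUnitary.2
  set lam : n → ℝ := hS.1.eigenvalues with hlam
  have hpos : ∀ j, 0 < a + lam j := fun j =>
    add_pos_of_pos_of_nonneg ha (hS.eigenvalues_nonneg j)
  have hspec : S = U * diagonal lam * star U := by
    simpa using hS.1.spectral_theorem
  have hsum : a • (1 : Matrix n n ℝ) + S = U * diagonal (fun j => a + lam j) * star U := by
    have h1 : U * (a • (1 : Matrix n n ℝ)) * star U = a • (1 : Matrix n n ℝ) := by
      rw [Matrix.mul_smul, Matrix.smul_mul, mul_one, hU2]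
    rw [← h1, hspec]
    rw [← Matrix.add_mul, ← Matrix.mul_add, smul_one_eq_diagonal, diagonal_add]
  have sandwich : ∀ (f g : n → ℝ),
      (U * diagonal f * star U) * (U * diagonal g * star U)
        = U * diagonal (fun j => f j * g j) * star U := by
    intro f g
    simp only [Matrix.mul_assoc]
    rw [← Matrix.mul_assoc (star U) U, hU1, one_mul, ← Matrix.mul_assoc (diagonal f),
      diagonal_mul_diagonal]
  have hinv : (a • (1 : Matrix n n ℝ) + S)⁻¹ = U * diagonal (fun j => (a + lam j)⁻¹) * star U := by
    apply inv_eq_right_inv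
    rw [hsum, sandwich]
    have : (fun j => (a + lam j) * (a + lam j)⁻¹) = fun _ => (1 : ℝ) :=
      funext fun j => mul_inv_cancel₀ (hpos j).ne'
    rw [this, diagonal_one, mul_one, hU2]
  rw [hinv]
  conv_lhs => rw [hspec]
  rw [sandwich, Matrix.trace_mul_cycle, hU1, one_mul, trace_diagonal]
  exact Finset.sum_congr rfl fun j _ => (div_eq_mul_inv _ _).symm

/-- The singular values of a rectangular real matrix A, as the eigenvalues of
the positive semidefinite square root of AᵀA (listed with multiplicity,
padded with zeros). -/
noncomputable def singVals {m₁ m₂ : ℕ} (A : Matrix (Fin m₁) (Fin m₂) ℝ) : Fin m₂ → ℝ :=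
  (PosSemidef.isHermitian_oldSqrt (Matrix.posSemidef_conjTranspose_mul_self A)).eigenvalues

/-- The transformed L1 functional of a matrix: TL1_a(A) = Σ_j (a+1)σ_j(A)/(a+σ_j(A)). -/
noncomputable def matTL1 {m₁ m₂ : ℕ} (a : ℝ) (A : Matrix (Fin m₁) (Fin m₂) ℝ) : ℝ :=
  ∑ j, (a + 1) * singVals A j / (a + singVals A j)

/-- If A = U_A D_A V_Aᵀ and B' = U_B D_B V_Bᵀ with orthonormal factors that are
mutually orthogonal (U_Aᵀ U_B = 0, V_Aᵀ V_B = 0) and positive diagonal entries,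
then TL1_a(A + B') = TL1_a(A) + TL1_a(B'). -/
theorem matTL1_add_of_orthogonal {m₁ m₂ r₁ r₂ : ℕ} (a : ℝ) (ha : 0 < a)
    (UA : Matrix (Fin m₁) (Fin r₁) ℝ) (VA : Matrix (Fin m₂) (Fin r₁) ℝ)
    (UB : Matrix (Fin m₁) (Fin r₂) ℝ) (VB : Matrix (Fin m₂) (Fin r₂) ℝ)
    (dA : Fin r₁ → ℝ) (dB : Fin r₂ → ℝ)
    (hdA : ∀ i, 0 < dA i) (hdB : ∀ i, 0 < dB i)
    (hUA : UAᵀ * UA = 1) (hVA : VAᵀ * VA = 1)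
    (hUB : UBᵀ * UB = 1) (hVB : VBᵀ * VB = 1)
    (hUAB : UAᵀ * UB = 0) (hVAB : VAᵀ * VB = 0) :
    matTL1 a (UA * Matrix.diagonal dA * VAᵀ + UB * Matrix.diagonal dB * VBᵀ) =
      matTL1 a (UA * Matrix.diagonal dA * VAᵀ) +
        matTL1 a (UB * Matrix.diagonal dB * VBᵀ) := by
  have hUBA : UBᵀ * UA = 0 := by
    have := congrArg Matrix.transpose hUAB
    simpa [Matrix.transpose_mul] using this
  have hVBA : VBᵀ * VA = 0 := by
    have := congrArg Matrix.transpose hVAB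
    simpa [Matrix.transpose_mul] using this
  -- helper rewriting lemmas
  have aa : ∀ (X : Matrix (Fin r₁) (Fin m₂) ℝ), UAᵀ * (UA * X) = X := fun X => by
    rw [← Matrix.mul_assoc, hUA, Matrix.one_mul]
  have bb : ∀ (X : Matrix (Fin r₂) (Fin m₂) ℝ), UBᵀ * (UB * X) = X := fun X => by
    rw [← Matrix.mul_assoc, hUB, Matrix.one_mul]
  have ab : ∀ (X : Matrix (Fin r₂) (Fin m₂) ℝ), UAᵀ * (UB * X) = 0 := fun X => by
    rw [← Matrix.mul_assoc, hUAB, Matrix.zero_mul]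
  have ba : ∀ (X : Matrix (Fin r₁) (Fin m₂) ℝ), UBᵀ * (UA * X) = 0 := fun X => by
    rw [← Matrix.mul_assoc, hUBA, Matrix.zero_mul]
  have vaa : ∀ (X : Matrix (Fin r₁) (Fin m₂) ℝ), VAᵀ * (VA * X) = X := fun X => by
    rw [← Matrix.mul_assoc, hVA, Matrix.one_mul]
  have vbb : ∀ (X : Matrix (Fin r₂) (Fin m₂) ℝ), VBᵀ * (VB * X) = X := fun X => by
    rw [← Matrix.mul_assoc, hVB, Matrix.one_mul]
  have vab : ∀ (X : Matrix (Fin r₂) (Fin m₂) ℝ), VAᵀ * (VB * X) = 0 := fun X => by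
    rw [← Matrix.mul_assoc, hVAB, Matrix.zero_mul]
  have vba : ∀ (X : Matrix (Fin r₁) (Fin m₂) ℝ), VBᵀ * (VA * X) = 0 := fun X => by
    rw [← Matrix.mul_assoc, hVBA, Matrix.zero_mul]
  set A : Matrix (Fin m₁) (Fin m₂) ℝ := UA * Matrix.diagonal dA * VAᵀ with hAdef
  set B : Matrix (Fin m₁) (Fin m₂) ℝ := UB * Matrix.diagonal dB * VBᵀ with hBdef
  set SA : Matrix (Fin m₂) (Fin m₂) ℝ := VA * Matrix.diagonal dA * VAᵀ with hSAdef
  set SB : Matrix (Fin m₂) (Fin m₂) ℝ := VB * Matrix.diagonal dB * VBᵀ with hSBdef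
  -- positive semidefiniteness of SA, SB
  have hSA : SA.PosSemidef := by
    have h : SA = VA * Matrix.diagonal dA * VAᴴ := by
      rw [conjTranspose_eq_transpose_of_trivial]
    rw [h]
    exact (posSemidef_diagonal_iff.mpr fun i => (hdA i).le).mul_mul_conjTranspose_same VA
  have hSB : SB.PosSemidef := by
    have h : SB = VB * Matrix.diagonal dB * VBᴴ := by
      rw [conjTranspose_eq_transpose_of_trivial]
    rw [h]
    exact (posSemidef_diagonal_iff.mpr fun i => (hdB i).le).mul_mul_conjTranspose_same VB
  have hSAB : (SA + SB).PosSemidef := hSA.add hSB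
  -- squares
  have hsqA : SA ^ 2 = Aᴴ * A := by
    rw [pow_two, hAdef, hSAdef]
    simp only [conjTranspose_eq_transpose_of_trivial, transpose_mul, transpose_transpose,
      diagonal_transpose, Matrix.mul_assoc]
    rw [vaa, aa]
  have hsqB : SB ^ 2 = Bᴴ * B := by
    rw [pow_two, hBdef, hSBdef]
    simp only [conjTranspose_eq_transpose_of_trivial, transpose_mul, transpose_transpose,
      diagonal_transpose, Matrix.mul_assoc]
    rw [vbb, bb]
  have hSASB : SA * SB = 0 := by
    rw [hSAdef, hSBdef]
    simp only [Matrix.mul_assoc]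
    rw [vab, Matrix.mul_zero, Matrix.mul_zero]
  have hSBSA : SB * SA = 0 := by
    rw [hSAdef, hSBdef]
    simp only [Matrix.mul_assoc]
    rw [vba, Matrix.mul_zero, Matrix.mul_zero]
  have hsqAB : (SA + SB) ^ 2 = (A + B)ᴴ * (A + B) := by
    have hAB : Aᴴ * B = 0 := by
      rw [hAdef, hBdef]
      simp only [conjTranspose_eq_transpose_of_trivial, transpose_mul, transpose_transpose,
        diagonal_transpose, Matrix.mul_assoc]
      rw [ab, Matrix.mul_zero, Matrix.mul_zero]
    have hBA : Bᴴ * A = 0 := by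
      rw [hAdef, hBdef]
      simp only [conjTranspose_eq_transpose_of_trivial, transpose_mul, transpose_transpose,
        diagonal_transpose, Matrix.mul_assoc]
      rw [ba, Matrix.mul_zero, Matrix.mul_zero]
    rw [pow_two, conjTranspose_add]
    simp only [Matrix.add_mul, Matrix.mul_add]
    rw [hAB, hBA, hSASB, hSBSA, show SA * SA = Aᴴ * A from by rw [← pow_two, hsqA],
      show SB * SB = Bᴴ * B from by rw [← pow_two, hsqB]]
  -- identify singular values
  have hfunA : singVals A = hSA.1.eigenvalues :=
    eig_congr _ _ (oldSqrt_eq_of_sq_eq hSA (posSemidef_conjTranspose_mul_self A) hsqA)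
  have hfunB : singVals B = hSB.1.eigenvalues :=
    eig_congr _ _ (oldSqrt_eq_of_sq_eq hSB (posSemidef_conjTranspose_mul_self B) hsqB)
  have hfunAB : singVals (A + B) = hSAB.1.eigenvalues :=
    eig_congr _ _ (oldSqrt_eq_of_sq_eq hSAB (posSemidef_conjTranspose_mul_self (A + B)) hsqAB)
  -- TL1 as trace
  have key : ∀ {S : Matrix (Fin m₂) (Fin m₂) ℝ} (hS : S.PosSemidef),
      (∑ j, (a + 1) * hS.1.eigenvalues j / (a + hS.1.eigenvalues j)) =
        (a + 1) * trace (S * (a • (1 : Matrix (Fin m₂) (Fin m₂) ℝ) + S)⁻¹) := by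
    intro S hS
    rw [trace_resolvent a ha hS, Finset.mul_sum]
    exact Finset.sum_congr rfl fun j _ => mul_div_assoc _ _ _
  have hmA : matTL1 a A = (a + 1) * trace (SA * (a • 1 + SA)⁻¹) := by
    rw [matTL1, hfunA]; exact key hSA
  have hmB : matTL1 a B = (a + 1) * trace (SB * (a • 1 + SB)⁻¹) := by
    rw [matTL1, hfunB]; exact key hSB
  have hmAB : matTL1 a (A + B) = (a + 1) * trace ((SA + SB) * (a • 1 + (SA + SB))⁻¹) := by
    rw [matTL1, hfunAB]; exact key hSAB
  rw [hmA, hmB, hmAB]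
  -- invertibility facts
  have hOne : (a • (1 : Matrix (Fin m₂) (Fin m₂) ℝ)).PosDef := by
    rw [smul_one_eq_diagonal]
    exact posDef_diagonal_iff.mpr fun _ => ha
  have hPA : (a • (1 : Matrix (Fin m₂) (Fin m₂) ℝ) + SA).PosDef := hOne.add_posSemidef hSA
  have hPB : (a • (1 : Matrix (Fin m₂) (Fin m₂) ℝ) + SB).PosDef := hOne.add_posSemidef hSB
  have hinvA : (a • 1 + SA) * (a • 1 + SA)⁻¹ = 1 :=
    Matrix.mul_nonsing_inv _ hPA.det_pos.ne'.isUnit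
  have hinvB : (a • 1 + SB) * (a • 1 + SB)⁻¹ = 1 :=
    Matrix.mul_nonsing_inv _ hPB.det_pos.ne'.isUnit
  have hSBinvA : SB * (a • 1 + SA)⁻¹ = a⁻¹ • SB := by
    have h1 : SB * (a • (1 : Matrix (Fin m₂) (Fin m₂) ℝ) + SA) = a • SB := by
      rw [Matrix.mul_add, Matrix.mul_smul, mul_one, hSBSA, add_zero]
    have h2 : a • (SB * (a • 1 + SA)⁻¹) = SB := by
      rw [← Matrix.smul_mul, ← h1, Matrix.mul_assoc, hinvA, mul_one]
    calc SB * (a • 1 + SA)⁻¹ = a⁻¹ • (a • (SB * (a • 1 + SA)⁻¹)) := by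
          rw [smul_smul, inv_mul_cancel₀ ha.ne', one_smul]
      _ = a⁻¹ • SB := by rw [h2]
  have hSAinvB : SA * (a • 1 + SB)⁻¹ = a⁻¹ • SA := by
    have h1 : SA * (a • (1 : Matrix (Fin m₂) (Fin m₂) ℝ) + SB) = a • SA := by
      rw [Matrix.mul_add, Matrix.mul_smul, mul_one, hSASB, add_zero]
    have h2 : a • (SA * (a • 1 + SB)⁻¹) = SA := by
      rw [← Matrix.smul_mul, ← h1, Matrix.mul_assoc, hinvB, mul_one]
    calc SA * (a • 1 + SB)⁻¹ = a⁻¹ • (a • (SA * (a • 1 + SB)⁻¹)) := by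
          rw [smul_smul, inv_mul_cancel₀ ha.ne', one_smul]
      _ = a⁻¹ • SA := by rw [h2]
  set L : Matrix (Fin m₂) (Fin m₂) ℝ := a • 1 + (SA + SB) with hLdef
  have hLA : L * (a • 1 + SA)⁻¹ = 1 + a⁻¹ • SB := by
    have : L = (a • 1 + SA) + SB := by rw [hLdef, add_assoc]
    rw [this, Matrix.add_mul, hinvA, hSBinvA]
  have hLB : L * (a • 1 + SB)⁻¹ = 1 + a⁻¹ • SA := by
    have : L = (a • 1 + SB) + SA := by rw [hLdef, add_comm SA SB, add_assoc]
    rw [this, Matrix.add_mul, hinvB, hSAinvB]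
  have hL1 : L * (a⁻¹ • 1) = 1 + (a⁻¹ • SA + a⁻¹ • SB) := by
    rw [Matrix.mul_smul, mul_one, hLdef, smul_add, smul_add, smul_smul,
      inv_mul_cancel₀ ha.ne', one_smul]
  have hXinv : L⁻¹ = (a • 1 + SA)⁻¹ + (a • 1 + SB)⁻¹ - a⁻¹ • 1 := by
    apply inv_eq_right_inv
    rw [Matrix.mul_sub, Matrix.mul_add, hLA, hLB, hL1]
    abel
  have hfinal : (SA + SB) * L⁻¹ = SA * (a • 1 + SA)⁻¹ + SB * (a • 1 + SB)⁻¹ := by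
    rw [hXinv, Matrix.mul_sub, Matrix.mul_add, Matrix.add_mul, Matrix.add_mul,
      hSAinvB, hSBinvA, Matrix.mul_smul, mul_one, smul_add]
    abel
  rw [hfinal, trace_add]
  ring
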